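/- Let G be a finite group, H ≤ G a subgroup, and φ: H → {±1} a nontrivial homomorphism. For the monomial G-lattice M = Z_φ induced from H to G, one has H^1(G,M) ≅ Z/2Z and Ш¹(G,M) = 0. More generally, for a direct sum of such induced lattices, H^1(G,M) ≅ (Z/2Z)^m with m the number of nontrivial characters occurring, and Ш¹(G,M) = 0 and Ш²(G,M) = 0. -/

import Mathlib

open Function

section Core
variable (G : Type) [Group G]

/-- A map is `G`-equivariant. -/
def IsEquivMapP {M N : Type} [AddCommGroup M] [AddCommGroup N]
    [DistribMulAction G M] [DistribMulAction G N] (f : M → N) : Prop :=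
  ∀ (g : G) (m : M), f (g • m) = g • f m

/-- `M` is a permutation `G`-lattice: it has a finite `ℤ`-basis permuted by `G`. -/
def IsPermLat (M : Type) [AddCommGroup M] [DistribMulAction G M] : Prop :=
  ∃ (ι : Type) (_ : Fintype ι) (b : Module.Basis ι ℤ M) (σ : G → ι → ι),
    ∀ (g : G) (i : ι), g • (b i : M) = b (σ g i)

/-- `M` is a lattice: finitely generated and free over `ℤ`. -/
def IsLat (M : Type) [AddCommGroup M] : Prop := Module.Free ℤ M ∧ Module.Finite ℤ M

/-- A short exact sequence `0 → M → E → P → 0` of `G`-modules. -/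
def ShortExactG (M E P : Type) [AddCommGroup M] [AddCommGroup E] [AddCommGroup P]
    [DistribMulAction G M] [DistribMulAction G E] [DistribMulAction G P] : Prop :=
  ∃ (i : M →+ E) (p : E →+ P), IsEquivMapP G i ∧ IsEquivMapP G p ∧
    Injective i ∧ Surjective p ∧ i.range = p.ker

/-- Colliot-Thélène–Sansuc equivalence of `G`-lattices. -/
def LatEquiv (M N : Type) [AddCommGroup M] [AddCommGroup N]
    [DistribMulAction G M] [DistribMulAction G N] : Prop :=
  ∃ (E : Type) (_ : AddCommGroup E) (_ : DistribMulAction G E)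
    (P : Type) (_ : AddCommGroup P) (_ : DistribMulAction G P)
    (Q : Type) (_ : AddCommGroup Q) (_ : DistribMulAction G Q),
    IsLat E ∧ IsPermLat G P ∧ IsPermLat G Q ∧
    ShortExactG G M E P ∧ ShortExactG G N E Q

/-- `M` is stably permutation. -/
def IsStablyPerm (M : Type) [AddCommGroup M] [DistribMulAction G M] : Prop :=
  ∃ (P : Type) (_ : AddCommGroup P) (_ : DistribMulAction G P)
    (Q : Type) (_ : AddCommGroup Q) (_ : DistribMulAction G Q),
    IsPermLat G P ∧ IsPermLat G Q ∧
    ∃ e : (M × P) ≃+ Q, IsEquivMapP G e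

/-- `M` is permutation projective: a direct summand of a permutation lattice. -/
def IsPermProj (M : Type) [AddCommGroup M] [DistribMulAction G M] : Prop :=
  ∃ (P : Type) (_ : AddCommGroup P) (_ : DistribMulAction G P), IsPermLat G P ∧
    ∃ (i : M →+ P) (r : P →+ M), IsEquivMapP G i ∧ IsEquivMapP G r ∧ ∀ m, r (i m) = m

/-- `M` is quasi-permutation: it embeds into a permutation lattice with permutation quotient. -/
def IsQuasiPerm (M : Type) [AddCommGroup M] [DistribMulAction G M] : Prop :=
  ∃ (P : Type) (_ : AddCommGroup P) (_ : DistribMulAction G P)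
    (Q : Type) (_ : AddCommGroup Q) (_ : DistribMulAction G Q),
    IsPermLat G P ∧ IsPermLat G Q ∧ ShortExactG G M P Q

variable (M : Type) [AddCommGroup M] [DistribMulAction G M]

/-- 1-cocycles. -/
def Z1 : AddSubgroup (G → M) where
  carrier := {f | ∀ g h : G, f (g * h) = g • f h + f g}
  zero_mem' := by intro g h; simp
  add_mem' := by
    intro f f' hf hf' g h
    simp only [Pi.add_apply, hf g h, hf' g h, smul_add]; abel
  neg_mem' := by
    intro f hf g h
    simp only [Pi.neg_apply, hf g h, smul_neg]; abel

/-- The coboundary homomorphism. -/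
def coboundHom : M →+ Z1 G M where
  toFun m := ⟨fun g => g • m - m, by intro g h; simp only [mul_smul, smul_sub]; abel⟩
  map_zero' := by apply Subtype.ext; funext g; simp
  map_add' := by
    intro a b; apply Subtype.ext; funext g
    show g • (a + b) - (a + b) = (g • a - a) + (g • b - b)
    simp only [smul_add]; abel

/-- 1-coboundaries. -/
def B1 : AddSubgroup (Z1 G M) := (coboundHom G M).range

/-- First group cohomology `H¹(G, M)`. -/
abbrev H1 := Z1 G M ⧸ B1 G M

/-- Restriction of cocycles to a subgroup. -/
def resZ1 (H : Subgroup G) : Z1 G M →+ Z1 H M where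
  toFun f := ⟨fun h => f.1 h, by
    intro a b
    have := f.2 (a : G) (b : G)
    simpa [Subgroup.smul_def] using this⟩
  map_zero' := rfl
  map_add' := fun _ _ => rfl

/-- Restriction on `H¹`. -/
def resH1 (H : Subgroup G) : H1 G M →+ H1 H M :=
  QuotientAddGroup.map _ _ (resZ1 G M H) (by
    rintro _ ⟨m, rfl⟩
    exact ⟨m, Subtype.ext rfl⟩)

/-- `Ш¹(G, M)`. -/
def Sha1 : AddSubgroup (H1 G M) :=
  ⨅ g : G, (resH1 G M (Subgroup.zpowers g)).ker

/-- `M` is coflasque: `H¹(H, M) = 0` for all subgroups `H ≤ G`. -/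
def IsCoflasque : Prop := ∀ H : Subgroup G, ∀ x y : H1 H M, x = y

end Core

section Core2
variable (G : Type) [Group G] (M : Type) [AddCommGroup M] [DistribMulAction G M]

/-- 2-cocycles. -/
def Z2 : AddSubgroup (G → G → M) where
  carrier := {f | ∀ g h k : G, g • f h k - f (g * h) k + f g (h * k) - f g h = 0}
  zero_mem' := by intro g h k; simp
  add_mem' := by
    intro f f' hf hf' g h k
    have h1 := hf g h k; have h2 := hf' g h k
    simp only [Pi.add_apply, smul_add]
    calc g • f h k + g • f' h k - (f (g * h) k + f' (g * h) k) +
          (f g (h * k) + f' g (h * k)) - (f g h + f' g h)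
        = (g • f h k - f (g * h) k + f g (h * k) - f g h) +
          (g • f' h k - f' (g * h) k + f' g (h * k) - f' g h) := by abel
      _ = 0 := by rw [h1, h2, add_zero]
  neg_mem' := by
    intro f hf g h k
    have h1 := hf g h k
    simp only [Pi.neg_apply, smul_neg]
    calc -(g • f h k) - -f (g * h) k + -f g (h * k) - -f g h
        = -(g • f h k - f (g * h) k + f g (h * k) - f g h) := by abel
      _ = 0 := by rw [h1, neg_zero]

/-- The 2-coboundary homomorphism. -/
def cobound2Hom : (G → M) →+ Z2 G M where
  toFun u := ⟨fun g h => g • u h - u (g * h) + u g, by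
    intro g h k
    simp only [mul_smul, smul_sub, smul_add, mul_assoc]
    abel⟩
  map_zero' := by apply Subtype.ext; funext g h; simp
  map_add' := by
    intro a b; apply Subtype.ext; funext g h
    show g • (a h + b h) - (a (g * h) + b (g * h)) + (a g + b g)
        = (g • a h - a (g * h) + a g) + (g • b h - b (g * h) + b g)
    simp only [smul_add]; abel

/-- 2-coboundaries. -/
def B2 : AddSubgroup (Z2 G M) := (cobound2Hom G M).range

/-- Second group cohomology `H²(G, M)`. -/
abbrev H2 := Z2 G M ⧸ B2 G M

/-- Restriction of 2-cocycles to a subgroup. -/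
def resZ2 (H : Subgroup G) : Z2 G M →+ Z2 H M where
  toFun f := ⟨fun a b => f.1 a b, by
    intro a b c
    have := f.2 (a : G) (b : G) (c : G)
    simpa [Subgroup.smul_def] using this⟩
  map_zero' := rfl
  map_add' := fun _ _ => rfl

/-- Restriction on `H²`. -/
def resH2 (H : Subgroup G) : H2 G M →+ H2 H M :=
  QuotientAddGroup.map _ _ (resZ2 G M H) (by
    rintro _ ⟨u, rfl⟩
    exact ⟨fun h : H => u (h : G), Subtype.ext rfl⟩)

/-- `Ш²(G, M)`. -/
def Sha2 : AddSubgroup (H2 G M) :=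
  ⨅ g : G, (resH2 G M (Subgroup.zpowers g)).ker

/-- The subgroup `2M`. -/
def twoSub : AddSubgroup M :=
  (AddMonoidHom.mk' (fun m : M => (2 : ℤ) • m) (by
    intro a b
    show (2 : ℤ) • (a + b) = (2 : ℤ) • a + (2 : ℤ) • b
    rw [smul_add])).range

/-- `M/2M`. -/
abbrev ModTwo := M ⧸ twoSub M

noncomputable instance : SMul G (ModTwo M) :=
  ⟨fun g => QuotientAddGroup.map _ _ (DistribMulAction.toAddMonoidHom M g) (by
    rintro _ ⟨m, rfl⟩
    refine ⟨g • m, ?_⟩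
    show (2 : ℤ) • (g • m) = g • ((2 : ℤ) • m)
    rw [smul_comm])⟩

theorem modTwo_smul_mk (g : G) (m : M) :
    g • (QuotientAddGroup.mk m : ModTwo M) = QuotientAddGroup.mk (g • m) := rfl

noncomputable instance : DistribMulAction G (ModTwo M) where
  one_smul x := by
    obtain ⟨m, rfl⟩ := QuotientAddGroup.mk_surjective x
    rw [modTwo_smul_mk, one_smul]
  mul_smul g h x := by
    obtain ⟨m, rfl⟩ := QuotientAddGroup.mk_surjective x
    rw [modTwo_smul_mk, modTwo_smul_mk, modTwo_smul_mk, mul_smul]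
  smul_zero g := map_zero (QuotientAddGroup.map _ _ (DistribMulAction.toAddMonoidHom M g) _)
  smul_add g x y := map_add (QuotientAddGroup.map _ _ (DistribMulAction.toAddMonoidHom M g) _) x y

variable [Finite G]

/-- Kernel of the norm map (for a finite group). -/
def normKer : AddSubgroup M where
  carrier := {x | ∑ᶠ g : G, g • x = 0}
  zero_mem' := by simp
  add_mem' := by
    intro x y hx hy
    have hx' : ∑ᶠ g : G, g • x = 0 := hx
    have hy' : ∑ᶠ g : G, g • y = 0 := hy
    show ∑ᶠ g : G, g • (x + y) = 0
    simp only [smul_add]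
    rw [finsum_add_distrib (Set.toFinite _) (Set.toFinite _), hx', hy', add_zero]
  neg_mem' := by
    intro x hx
    have hx' : ∑ᶠ g : G, g • x = 0 := hx
    show ∑ᶠ g : G, g • (-x) = 0
    simp only [smul_neg]
    rw [finsum_neg_distrib, hx', neg_zero]

/-- The subgroup generated by elements `g • m - m`. -/
def augSub : AddSubgroup M := AddSubgroup.closure {x | ∃ (g : G) (m : M), x = g • m - m}

/-- Tate cohomology `Ĥ⁻¹(G, M)` (for a finite group `G`). -/
abbrev TateNeg1 := normKer G M ⧸ ((augSub G M).addSubgroupOf (normKer G M))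

/-- `M` is flasque: `Ĥ⁻¹(H, M) = 0` for all subgroups `H ≤ G`. -/
def IsFlasque : Prop := ∀ H : Subgroup G, ∀ x y : TateNeg1 H M, x = y

end Core2

section Core3
variable (G : Type) [Group G]

/-- `M` is equivalent to a direct summand of a quasi-permutation `G`-lattice. -/
def IsEquivSummandQP (M : Type) [AddCommGroup M] [DistribMulAction G M] : Prop :=
  ∃ (S : Type) (_ : AddCommGroup S) (_ : DistribMulAction G S)
    (D : Type) (_ : AddCommGroup D) (_ : DistribMulAction G D)
    (D' : Type) (_ : AddCommGroup D') (_ : DistribMulAction G D'),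
    IsLat S ∧ IsQuasiPerm G S ∧ (∃ e : (D × D') ≃+ S, IsEquivMapP G e) ∧
    LatEquiv G M D

end Core3

section Tensor
open TensorProduct
variable (G : Type) [Group G] (M : Type) [AddCommGroup M] [DistribMulAction G M]

/-- The action of `g : G` as a `ℤ`-linear map. -/
def gLin (g : G) : M →ₗ[ℤ] M := (DistribMulAction.toAddMonoidHom M g).toIntLinearMap

noncomputable instance tensorSMul : SMul G (M ⊗[ℤ] M) :=
  ⟨fun g => TensorProduct.map (gLin G M g) (gLin G M g)⟩

theorem tsmul_def (g : G) (x : M ⊗[ℤ] M) :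
    g • x = TensorProduct.map (gLin G M g) (gLin G M g) x := rfl

theorem gLin_one : gLin G M 1 = LinearMap.id := by
  ext m; show (1 : G) • m = m; rw [one_smul]

theorem gLin_mul (g h : G) : gLin G M (g * h) = (gLin G M g).comp (gLin G M h) := by
  ext m; show (g * h) • m = g • h • m; rw [mul_smul]

noncomputable instance tensorAct : DistribMulAction G (M ⊗[ℤ] M) where
  one_smul x := by rw [tsmul_def, gLin_one, TensorProduct.map_id]; rfl
  mul_smul g h x := by
    rw [tsmul_def, tsmul_def, tsmul_def, gLin_mul, TensorProduct.map_comp]; rfl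
  smul_zero g := map_zero _
  smul_add g x y := map_add _ x y

/-- Generators of the symmetric relation. -/
def symSpan : @Submodule ℤ (M ⊗[ℤ] M) _ _ TensorProduct.instModule :=
  Submodule.span ℤ {x | ∃ a b : M, x = a ⊗ₜ[ℤ] b - b ⊗ₜ[ℤ] a}

/-- Generators of the wedge relation. -/
def wedSpan : @Submodule ℤ (M ⊗[ℤ] M) _ _ TensorProduct.instModule :=
  Submodule.span ℤ {x | ∃ a : M, x = a ⊗ₜ[ℤ] a}

/-- The second symmetric power `Sym²M`. -/
abbrev Sym2Q := (M ⊗[ℤ] M) ⧸ symSpan M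

/-- The second exterior power `∧²M`. -/
abbrev Wedge2Q := (M ⊗[ℤ] M) ⧸ wedSpan M

theorem symSpan_le_comap (g : G) :
    symSpan M ≤ (symSpan M).comap (TensorProduct.map (gLin G M g) (gLin G M g)) := by
  rw [← Submodule.map_le_iff_le_comap, symSpan, Submodule.map_span]
  refine Submodule.span_le.2 ?_
  rintro _ ⟨_, ⟨a, b, rfl⟩, rfl⟩
  refine Submodule.subset_span ?_
  exact ⟨g • a, g • b, by simp [TensorProduct.map_tmul]; rfl⟩

theorem wedSpan_le_comap (g : G) :
    wedSpan M ≤ (wedSpan M).comap (TensorProduct.map (gLin G M g) (gLin G M g)) := by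
  rw [← Submodule.map_le_iff_le_comap, wedSpan, Submodule.map_span]
  refine Submodule.span_le.2 ?_
  rintro _ ⟨_, ⟨a, rfl⟩, rfl⟩
  exact Submodule.subset_span ⟨g • a, by simp [TensorProduct.map_tmul]; rfl⟩

noncomputable instance sym2SMul : SMul G (Sym2Q M) :=
  ⟨fun g => Submodule.mapQ _ _ (TensorProduct.map (gLin G M g) (gLin G M g))
    (symSpan_le_comap G M g)⟩

noncomputable instance wedge2SMul : SMul G (Wedge2Q M) :=
  ⟨fun g => Submodule.mapQ _ _ (TensorProduct.map (gLin G M g) (gLin G M g))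
    (wedSpan_le_comap G M g)⟩

theorem sym2_smul_mk (g : G) (x : M ⊗[ℤ] M) :
    g • ((symSpan M).mkQ x) = (symSpan M).mkQ (g • x) :=
  Submodule.mapQ_apply _ _ _ _

theorem wedge2_smul_mk (g : G) (x : M ⊗[ℤ] M) :
    g • ((wedSpan M).mkQ x) = (wedSpan M).mkQ (g • x) :=
  Submodule.mapQ_apply _ _ _ _

noncomputable instance sym2Act : DistribMulAction G (Sym2Q M) where
  one_smul x := by
    obtain ⟨y, rfl⟩ := (symSpan M).mkQ_surjective x
    rw [sym2_smul_mk, one_smul]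
  mul_smul g h x := by
    obtain ⟨y, rfl⟩ := (symSpan M).mkQ_surjective x
    rw [sym2_smul_mk, sym2_smul_mk, sym2_smul_mk, mul_smul]
  smul_zero g := map_zero (Submodule.mapQ _ _ _ (symSpan_le_comap G M g))
  smul_add g x y := map_add (Submodule.mapQ _ _ _ (symSpan_le_comap G M g)) x y

noncomputable instance wedge2Act : DistribMulAction G (Wedge2Q M) where
  one_smul x := by
    obtain ⟨y, rfl⟩ := (wedSpan M).mkQ_surjective x
    rw [wedge2_smul_mk, one_smul]
  mul_smul g h x := by
    obtain ⟨y, rfl⟩ := (wedSpan M).mkQ_surjective x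
    rw [wedge2_smul_mk, wedge2_smul_mk, wedge2_smul_mk, mul_smul]
  smul_zero g := map_zero (Submodule.mapQ _ _ _ (wedSpan_le_comap G M g))
  smul_add g x y := map_add (Submodule.mapQ _ _ _ (wedSpan_le_comap G M g)) x y

variable {M} {N : Type} [AddCommGroup N]

/-- The map `Sym²f` induced by a linear map `f`. -/
noncomputable def sym2Map (f : M →ₗ[ℤ] N) : Sym2Q M →ₗ[ℤ] Sym2Q N :=
  Submodule.mapQ _ _ (TensorProduct.map f f) (by
    rw [← Submodule.map_le_iff_le_comap, symSpan, Submodule.map_span]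
    refine Submodule.span_le.2 ?_
    rintro _ ⟨_, ⟨a, b, rfl⟩, rfl⟩
    exact Submodule.subset_span ⟨f a, f b, by simp [TensorProduct.map_tmul]⟩)

/-- The map `∧²f` induced by a linear map `f`. -/
noncomputable def wedge2Map (f : M →ₗ[ℤ] N) : Wedge2Q M →ₗ[ℤ] Wedge2Q N :=
  Submodule.mapQ _ _ (TensorProduct.map f f) (by
    rw [← Submodule.map_le_iff_le_comap, wedSpan, Submodule.map_span]
    refine Submodule.span_le.2 ?_
    rintro _ ⟨_, ⟨a, rfl⟩, rfl⟩
    exact Submodule.subset_span ⟨f a, by simp [TensorProduct.map_tmul]⟩)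

end Tensor

section PermMod
variable (G : Type) [Group G] (X : Type) [MulAction G X]

/-- The permutation action on `ℤ[X] = X → ℤ`. -/
instance permSMul : SMul G (X → ℤ) := ⟨fun g f x => f (g⁻¹ • x)⟩

theorem perm_smul_def (g : G) (f : X → ℤ) (x : X) : (g • f) x = f (g⁻¹ • x) := rfl

instance permAct : DistribMulAction G (X → ℤ) where
  one_smul f := funext fun x => by rw [perm_smul_def, inv_one, one_smul]
  mul_smul g h f := funext fun x => by
    rw [perm_smul_def, perm_smul_def, perm_smul_def, mul_inv_rev, mul_smul]
  smul_zero g := rfl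
  smul_add g f f' := rfl

variable [Fintype X]

/-- The augmentation kernel `A = ker(ℤ[X] → ℤ)`. -/
def augKer : AddSubgroup (X → ℤ) where
  carrier := {f | ∑ x, f x = 0}
  zero_mem' := by simp
  add_mem' := by
    intro a b ha hb
    have ha' : ∑ x, a x = 0 := ha
    have hb' : ∑ x, b x = 0 := hb
    show ∑ x, (a x + b x) = 0
    rw [Finset.sum_add_distrib, ha', hb', add_zero]
  neg_mem' := by
    intro a ha
    have ha' : ∑ x, a x = 0 := ha
    show ∑ x, (-(a x)) = 0
    rw [Finset.sum_neg_distrib, ha', neg_zero]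

theorem smul_mem_augKer (g : G) (f : X → ℤ) (hf : f ∈ augKer X) :
    g • f ∈ augKer X := by
  have hf' : ∑ x, f x = 0 := hf
  show ∑ x, f (g⁻¹ • x) = 0
  exact (Equiv.sum_comp (MulAction.toPerm (g⁻¹ : G)) f).trans hf'

instance augKerSMul : SMul G (augKer X) :=
  ⟨fun g f => ⟨g • (f : X → ℤ), smul_mem_augKer G X g f f.2⟩⟩

theorem augKer_smul_def (g : G) (f : augKer X) :
    ((g • f : augKer X) : X → ℤ) = g • (f : X → ℤ) := rfl

instance augKerAct : DistribMulAction G (augKer X) where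
  one_smul f := Subtype.ext (by rw [augKer_smul_def, one_smul])
  mul_smul g h f := Subtype.ext (by
    rw [augKer_smul_def, augKer_smul_def, augKer_smul_def, mul_smul])
  smul_zero g := Subtype.ext (by
    rw [augKer_smul_def]
    show g • (0 : X → ℤ) = 0
    rw [smul_zero])
  smul_add g f f' := Subtype.ext (by
    show g • ((f : X → ℤ) + f') = g • (f : X → ℤ) + g • (f' : X → ℤ)
    rw [smul_add])

end PermMod

section P2sec
variable (G : Type) [Group G]

/-- The set of 2-element subsets of `X`. -/
def P2 (X : Type) [DecidableEq X] : Type := {s : Finset X // s.card = 2}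

noncomputable instance (X : Type) [DecidableEq X] [Fintype X] : Fintype (P2 X) := by
  unfold P2; infer_instance

instance p2SMul (X : Type) [DecidableEq X] [MulAction G X] : SMul G (P2 X) :=
  ⟨fun g s => ⟨s.1.image (fun x => g • x), by
    rw [Finset.card_image_of_injective _ (MulAction.injective g)]; exact s.2⟩⟩

theorem p2_smul_def (X : Type) [DecidableEq X] [MulAction G X] (g : G) (s : P2 X) :
    (g • s).1 = s.1.image (fun x => g • x) := rfl

instance p2Act (X : Type) [DecidableEq X] [MulAction G X] : MulAction G (P2 X) where
  one_smul s := Subtype.ext (by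
    rw [p2_smul_def]
    simp)
  mul_smul g h s := Subtype.ext (by
    simp only [p2_smul_def, Finset.image_image]
    refine Finset.image_congr ?_
    intro x _
    exact mul_smul g h x)

end P2sec

/-- The root lattice `A_{n-1}` as an `S_n`-lattice. -/
abbrev rootLat (n : ℕ) := augKer (Fin n)


/-- The monomial lattice `ℤ_φ` induced from `H` to `G`. -/
def indSign (G : Type) [Group G] (H : Subgroup G) (φ : H →* ℤˣ) : AddSubgroup (G → ℤ) where
  carrier := {f | ∀ (g : G) (h : H), f (g * h) = (φ h : ℤ) * f g}
  zero_mem' := by intro g h; simp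
  add_mem' := by
    intro a b ha hb g h
    show a (g * h) + b (g * h) = (φ h : ℤ) * (a g + b g)
    rw [ha g h, hb g h]; ring
  neg_mem' := by
    intro a ha g h
    show -(a (g * h)) = (φ h : ℤ) * (-(a g))
    rw [ha g h]; ring

instance indSignSMul (G : Type) [Group G] (H : Subgroup G) (φ : H →* ℤˣ) :
    SMul G (indSign G H φ) :=
  ⟨fun σ f => ⟨fun g => (f : G → ℤ) (σ⁻¹ * g), by
    intro g h
    show (f : G → ℤ) (σ⁻¹ * (g * h)) = (φ h : ℤ) * (f : G → ℤ) (σ⁻¹ * g)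
    rw [← mul_assoc]
    exact f.2 (σ⁻¹ * g) h⟩⟩

theorem indSign_smul_def (G : Type) [Group G] (H : Subgroup G) (φ : H →* ℤˣ)
    (σ : G) (f : indSign G H φ) (g : G) :
    ((σ • f : indSign G H φ) : G → ℤ) g = (f : G → ℤ) (σ⁻¹ * g) := rfl

instance indSignAct (G : Type) [Group G] (H : Subgroup G) (φ : H →* ℤˣ) :
    DistribMulAction G (indSign G H φ) where
  one_smul f := Subtype.ext (funext fun g => by
    rw [indSign_smul_def, inv_one, one_mul])
  mul_smul σ τ f := Subtype.ext (funext fun g => by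
    simp only [indSign_smul_def, mul_inv_rev, mul_assoc])
  smul_zero σ := Subtype.ext rfl
  smul_add σ f f' := Subtype.ext rfl

/-!
Realise `Ind_H^G A_φ` as the functions `f : G → A` with `f (g * h) = φ h • f g`. Evaluating a
1-cocycle `f` at `(h, 1)` is Shapiro's map: it gives a sign-twisted cocycle
`F (h * h') = φ h • F h' + F h` on `H`, and `f` is a coboundary as soon as `F` is. Restricting to
the cyclic subgroup generated by `h` writes `F h = φ h • a - a`. Hence `F` vanishes on `ker φ`
and is constant on the other coset, so one `a` works for all `h`: `Ш¹ = 0` for every coefficient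
group. Over `ℤ` with `H` finite, `F` vanishes on `ker φ` anyway (there it is a homomorphism from
a finite group to `ℤ`), so the class of `f` is read off from the parity of `F h₀` for any `h₀`
with `φ h₀ = -1`, and `H¹ ≅ ℤ/2`. For `Ш²`, use
`0 → M → M_ℚ → M_{ℚ/ℤ} → 0`: averaging over the group kills `H¹` and `H²` of `M_ℚ`, so the
connecting map embeds `Ш²(M)` into `Ш¹(M_{ℚ/ℤ}) = 0`. Products are handled componentwise.
-/

section Functoriality

variable {G : Type} [Group G] {M N : Type} [AddCommGroup M] [AddCommGroup N]
  [DistribMulAction G M] [DistribMulAction G N]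

@[simp]
theorem coboundHom_apply (m : M) (g : G) : (coboundHom G M m).1 g = g • m - m := rfl

@[simp]
theorem cobound2Hom_apply (u : G → M) (g h : G) :
    (cobound2Hom G M u).1 g h = g • u h - u (g * h) + u g := rfl

theorem mem_B1_iff {f : Z1 G M} : f ∈ B1 G M ↔ ∃ m : M, ∀ g, g • m - m = f.1 g :=
  exists_congr fun _ => ⟨fun h g => congrArg (·.1 g) h, fun h => Subtype.ext (funext h)⟩

theorem mem_B2_iff {c : Z2 G M} :
    c ∈ B2 G M ↔ ∃ u : G → M, ∀ g h, g • u h - u (g * h) + u g = c.1 g h :=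
  exists_congr fun _ => ⟨fun h g k => congrArg (·.1 g k) h,
    fun h => Subtype.ext (funext fun g => funext (h g))⟩

theorem Z1_apply_one (f : Z1 G M) : f.1 1 = 0 := by
  simpa using f.2 1 1

theorem Z1_apply_inv (f : Z1 G M) (σ : G) : f.1 σ⁻¹ = -(σ⁻¹ • f.1 σ) := by
  have := f.2 σ⁻¹ σ
  rw [inv_mul_cancel, Z1_apply_one] at this
  exact eq_neg_of_add_eq_zero_right this.symm

def mapZ1 (α : M →+ N) (hα : IsEquivMapP G α) : Z1 G M →+ Z1 G N :=
  ((AddMonoidHom.compLeft α G).comp (Z1 G M).subtype).codRestrict _ fun f g h => by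
    simp [f.2 g h, show ∀ m, α (g • m) = g • α m from hα g]

@[simp]
theorem mapZ1_apply (α : M →+ N) (hα : IsEquivMapP G α) (f : Z1 G M) (g : G) :
    (mapZ1 α hα f).1 g = α (f.1 g) := rfl

def mapH1 (α : M →+ N) (hα : IsEquivMapP G α) : H1 G M →+ H1 G N :=
  QuotientAddGroup.map _ _ (mapZ1 α hα) fun _ ⟨m, hm⟩ => mem_B1_iff.2
    ⟨α m, fun g => by simp [← hm, hα g m]⟩

def h1Congr (e : M ≃+ N) (he : IsEquivMapP G e) : H1 G M ≃+ H1 G N :=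
  AddMonoidHom.toAddEquiv (mapH1 e.toAddMonoidHom he)
    (mapH1 e.symm.toAddMonoidHom fun g n => e.injective (by simp [he g]))
    (by ext f; show ((mapZ1 _ _ (mapZ1 _ _ f) : Z1 G M) : H1 G M) = f; congr; ext; simp)
    (by ext f; show ((mapZ1 _ _ (mapZ1 _ _ f) : Z1 G N) : H1 G N) = f; congr; ext; simp)

theorem resH1_mapH1 (α : M →+ N) (hα : IsEquivMapP G α) (K : Subgroup G) (x : H1 G M) :
    resH1 G N K (mapH1 α hα x) = mapH1 (G := K) α (fun k => hα k) (resH1 G M K x) := by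
  induction x using QuotientAddGroup.induction_on with
  | H f => rfl

theorem mem_Sha1_iff (x : H1 G M) :
    x ∈ Sha1 G M ↔ ∀ g : G, resH1 G M (Subgroup.zpowers g) x = 0 := by
  simp [Sha1, AddSubgroup.mem_iInf]

theorem mapH1_mem_Sha1 (α : M →+ N) (hα : IsEquivMapP G α) {x : H1 G M} (hx : x ∈ Sha1 G M) :
    mapH1 α hα x ∈ Sha1 G N := by
  rw [mem_Sha1_iff] at hx ⊢
  intro g
  rw [resH1_mapH1, hx g, map_zero]

theorem Sha1_eq_bot_iff : Sha1 G M = ⊥ ↔ ∀ f : Z1 G M,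
    (∀ g : G, resZ1 G M (Subgroup.zpowers g) f ∈ B1 _ M) → f ∈ B1 G M := by
  simp only [eq_bot_iff, SetLike.le_def, AddSubgroup.mem_bot]
  refine ⟨fun h f hf => ?_, fun h x hx => ?_⟩
  · refine (QuotientAddGroup.eq_zero_iff f).1 (h ((mem_Sha1_iff _).2 fun g => ?_))
    exact (QuotientAddGroup.eq_zero_iff _).2 (hf g)
  · induction x using QuotientAddGroup.induction_on with
    | H f =>
      refine (QuotientAddGroup.eq_zero_iff f).2 (h f fun g => ?_)
      exact (QuotientAddGroup.eq_zero_iff _).1 ((mem_Sha1_iff _).1 hx g)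

def mapZ2 (α : M →+ N) (hα : IsEquivMapP G α) : Z2 G M →+ Z2 G N :=
  ((AddMonoidHom.compLeft (AddMonoidHom.compLeft α G) G).comp (Z2 G M).subtype).codRestrict _
    fun c g h k => by
      simpa [show ∀ m, α (g • m) = g • α m from hα g] using congrArg α (c.2 g h k)

@[simp]
theorem mapZ2_apply (α : M →+ N) (hα : IsEquivMapP G α) (c : Z2 G M) (g h : G) :
    (mapZ2 α hα c).1 g h = α (c.1 g h) := rfl

def mapH2 (α : M →+ N) (hα : IsEquivMapP G α) : H2 G M →+ H2 G N :=
  QuotientAddGroup.map _ _ (mapZ2 α hα) fun _ ⟨u, hu⟩ => mem_B2_iff.2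
    ⟨fun g => α (u g), fun g h => by simp [← hu, hα g]⟩

theorem resH2_mapH2 (α : M →+ N) (hα : IsEquivMapP G α) (K : Subgroup G) (x : H2 G M) :
    resH2 G N K (mapH2 α hα x) = mapH2 (G := K) α (fun k => hα k) (resH2 G M K x) := by
  induction x using QuotientAddGroup.induction_on with
  | H f => rfl

theorem mem_Sha2_iff (x : H2 G M) :
    x ∈ Sha2 G M ↔ ∀ g : G, resH2 G M (Subgroup.zpowers g) x = 0 := by
  simp [Sha2, AddSubgroup.mem_iInf]

theorem mapH2_mem_Sha2 (α : M →+ N) (hα : IsEquivMapP G α) {x : H2 G M} (hx : x ∈ Sha2 G M) :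
    mapH2 α hα x ∈ Sha2 G N := by
  rw [mem_Sha2_iff] at hx ⊢
  intro g
  rw [resH2_mapH2, hx g, map_zero]

theorem Sha2_eq_bot_iff : Sha2 G M = ⊥ ↔ ∀ c : Z2 G M,
    (∀ g : G, resZ2 G M (Subgroup.zpowers g) c ∈ B2 _ M) → c ∈ B2 G M := by
  simp only [eq_bot_iff, SetLike.le_def, AddSubgroup.mem_bot]
  refine ⟨fun h c hc => ?_, fun h x hx => ?_⟩
  · refine (QuotientAddGroup.eq_zero_iff c).1 (h ((mem_Sha2_iff _).2 fun g => ?_))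
    exact (QuotientAddGroup.eq_zero_iff _).2 (hc g)
  · induction x using QuotientAddGroup.induction_on with
    | H c =>
      refine (QuotientAddGroup.eq_zero_iff c).2 (h c fun g => ?_)
      exact (QuotientAddGroup.eq_zero_iff _).1 ((mem_Sha2_iff _).1 hx g)

theorem eq_zero_of_eq_bot {S : AddSubgroup M} (hS : S = ⊥) (x : S) : x = 0 :=
  Subtype.ext (AddSubgroup.mem_bot.1 (hS ▸ x.2))

end Functoriality

section Pi

variable {G : Type} [Group G] {ι : Type} {M : ι → Type} [∀ i, AddCommGroup (M i)]
  [∀ i, DistribMulAction G (M i)]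

theorem isEquivMapP_eval (i : ι) : IsEquivMapP G (Pi.evalAddMonoidHom M i) := fun _ _ => rfl

theorem pi_mem_B1 {f : Z1 G (∀ i, M i)}
    (hf : ∀ i, mapZ1 _ (isEquivMapP_eval i) f ∈ B1 G (M i)) : f ∈ B1 G (∀ i, M i) := by
  choose m hm using fun i => mem_B1_iff.1 (hf i)
  exact mem_B1_iff.2 ⟨m, fun g => funext fun i => hm i g⟩

theorem pi_mem_B2 {c : Z2 G (∀ i, M i)}
    (hc : ∀ i, mapZ2 _ (isEquivMapP_eval i) c ∈ B2 G (M i)) : c ∈ B2 G (∀ i, M i) := by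
  choose u hu using fun i => mem_B2_iff.1 (hc i)
  exact mem_B2_iff.2 ⟨fun g i => u i g, fun g h => funext fun i => hu i g h⟩

noncomputable def h1PiEquiv : H1 G (∀ i, M i) ≃+ ∀ i, H1 G (M i) := by
  refine AddEquiv.ofBijective (AddMonoidHom.pi fun i => mapH1 _ (isEquivMapP_eval i)) ⟨?_, ?_⟩
  · refine (injective_iff_map_eq_zero _).2 fun x hx => ?_
    induction x using QuotientAddGroup.induction_on with
    | H f =>
      refine (QuotientAddGroup.eq_zero_iff f).2 (pi_mem_B1 fun i => ?_)
      exact (QuotientAddGroup.eq_zero_iff _).1 (congrFun hx i)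
  · intro y
    choose f hf using fun i => QuotientAddGroup.mk_surjective (y i)
    exact ⟨(⟨fun g i => (f i).1 g, fun g h => funext fun i => (f i).2 g h⟩ : Z1 G (∀ i, M i)),
      funext hf⟩

theorem eq_zero_of_mapH2_eval_eq_zero {x : H2 G (∀ i, M i)}
    (hx : ∀ i, mapH2 _ (isEquivMapP_eval i) x = 0) : x = 0 := by
  induction x using QuotientAddGroup.induction_on with
  | H c =>
    refine (QuotientAddGroup.eq_zero_iff c).2 (pi_mem_B2 fun i => ?_)
    exact (QuotientAddGroup.eq_zero_iff _).1 (hx i)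

theorem Sha1_pi_eq_bot (h : ∀ i, Sha1 G (M i) = ⊥) : Sha1 G (∀ i, M i) = ⊥ :=
  eq_bot_iff.2 fun _ hx => (AddEquiv.map_eq_zero_iff h1PiEquiv).1 <| funext fun i =>
    AddSubgroup.mem_bot.1 (h i ▸ mapH1_mem_Sha1 _ (isEquivMapP_eval i) hx)

theorem Sha2_pi_eq_bot (h : ∀ i, Sha2 G (M i) = ⊥) : Sha2 G (∀ i, M i) = ⊥ :=
  eq_bot_iff.2 fun _ hx => eq_zero_of_mapH2_eval_eq_zero fun i =>
    AddSubgroup.mem_bot.1 (h i ▸ mapH2_mem_Sha2 _ (isEquivMapP_eval i) hx)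

end Pi

open Classical in
noncomputable def piEquivPiSubtypeOfEqZero {ι : Type} {B : ι → Type} [∀ i, AddCommGroup (B i)]
    (p : ι → Prop) (h : ∀ i, ¬p i → ∀ b : B i, b = 0) : (∀ i, B i) ≃+ ∀ j : {i // p i}, B j where
  toFun x j := x j
  invFun y i := if hi : p i then y ⟨i, hi⟩ else 0
  left_inv x := funext fun i => by
    by_cases hi : p i
    · simp [hi]
    · simp [hi, h i hi (x i)]
  right_inv y := funext fun j => by simp [j.2]
  map_add' _ _ := rfl

section Averaging

variable {G : Type} [Group G] [Finite G] {V : Type} [AddCommGroup V] [DistribMulAction G V]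

theorem mem_B1_of_bijective_nsmul (hV : Bijective fun v : V => Nat.card G • v) (f : Z1 G V) :
    f ∈ B1 G V := by
  have := Fintype.ofFinite G
  obtain ⟨w, hw : Nat.card G • w = _⟩ := hV.2 (-∑ b, f.1 b)
  refine mem_B1_iff.2 ⟨w, fun a => hV.1 ?_⟩
  have hsum : ∑ b, f.1 b = a • ∑ b, f.1 b + Nat.card G • f.1 a := by
    conv_lhs => rw [← Equiv.sum_comp (Equiv.mulLeft a) f.1]
    rw [Finset.smul_sum, Nat.card_eq_fintype_card, ← Finset.card_univ, ← Finset.sum_const,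
      ← Finset.sum_add_distrib]
    exact Finset.sum_congr rfl fun b _ => f.2 a b
  show Nat.card G • (a • w - w) = Nat.card G • f.1 a
  rw [smul_sub, smul_comm _ a w, hw, smul_neg]
  linear_combination (norm := abel) hsum

theorem mem_B2_of_bijective_nsmul (hV : Bijective fun v : V => Nat.card G • v) (c : Z2 G V) :
    c ∈ B2 G V := by
  have := Fintype.ofFinite G
  choose u hu using fun g => hV.2 (∑ k, c.1 g k)
  refine mem_B2_iff.2 ⟨u, fun g h => hV.1 ?_⟩
  have hsum : g • ∑ k, c.1 h k - ∑ k, c.1 (g * h) k + ∑ k, c.1 g k = Nat.card G • c.1 g h := by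
    rw [← Equiv.sum_comp (Equiv.mulLeft h) (c.1 g), Finset.smul_sum, Nat.card_eq_fintype_card,
      ← Finset.card_univ, ← Finset.sum_const, ← Finset.sum_sub_distrib, ← Finset.sum_add_distrib]
    refine Finset.sum_congr rfl fun k _ => ?_
    simp only [Equiv.coe_mulLeft]
    linear_combination (norm := abel) c.2 g h k
  show Nat.card G • (g • u h - u (g * h) + u g) = Nat.card G • c.1 g h
  simpa only [smul_add, smul_sub, smul_comm _ g (u h), hu] using hsum

end Averaging

section ExactSequence

variable {G : Type} [Group G] {M V W : Type} [AddCommGroup M] [AddCommGroup V] [AddCommGroup W]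
  [DistribMulAction G M] [DistribMulAction G V] [DistribMulAction G W] {i : M →+ V} {p : V →+ W}

theorem exists_smul_sub_eq_comp_of_cobound2_eq (hi : IsEquivMapP G i) (hp : IsEquivMapP G p)
    (hpi : ∀ m, p (i m) = 0) (hV : ∀ f : Z1 G V, f ∈ B1 G V) {c : Z2 G M} (hc : c ∈ B2 G M)
    {u : G → V} (hu : ∀ g h, g • u h - u (g * h) + u g = i (c.1 g h)) :
    ∃ w : W, ∀ g, g • w - w = p (u g) := by
  obtain ⟨v, hv⟩ := mem_B2_iff.1 hc
  have hd : (fun g => u g - i (v g)) ∈ Z1 G V := fun g h => by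
    have hiv := congrArg i (hv g h)
    simp only [map_add, map_sub, hi g] at hiv
    linear_combination (norm := skip) hiv - hu g h
    simp only [smul_sub]
    abel
  obtain ⟨y, hy⟩ := mem_B1_iff.1 (hV ⟨_, hd⟩)
  refine ⟨p y, fun g => ?_⟩
  rw [← hp g, ← map_sub, hy g, map_sub, hpi, sub_zero]

theorem Sha2_eq_bot_of_exact (hi : IsEquivMapP G i) (hp : IsEquivMapP G p)
    (hinj : Injective i) (hsurj : Surjective p) (hexact : Function.Exact i p)
    (hV2 : ∀ c : Z2 G V, c ∈ B2 G V) (hV1 : ∀ g : G, ∀ f : Z1 (Subgroup.zpowers g) V, f ∈ B1 _ V)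
    (hW : Sha1 G W = ⊥) : Sha2 G M = ⊥ := by
  refine Sha2_eq_bot_iff.2 fun c hc => ?_
  have hpi : ∀ m, p (i m) = 0 := fun m => (hexact _).2 ⟨m, rfl⟩
  obtain ⟨u, hu⟩ := mem_B2_iff.1 (hV2 (mapZ2 i hi c))
  -- `p ∘ u` is a 1-cocycle of `W` whose class is sent to that of `c` by the connecting map.
  have hpu : (fun g => p (u g)) ∈ Z1 G W := fun g h => by
    have := congrArg p (hu g h)
    rw [mapZ2_apply, hpi, map_add, map_sub, hp g] at this
    linear_combination (norm := abel) -this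
  obtain ⟨w, hw⟩ := mem_B1_iff.1 <| Sha1_eq_bot_iff.1 hW ⟨_, hpu⟩ fun g => mem_B1_iff.2 <|
    exists_smul_sub_eq_comp_of_cobound2_eq (G := Subgroup.zpowers g) (fun a => hi a)
      (fun a => hp a) hpi (hV1 g) (hc g) fun a b => hu a b
  obtain ⟨w, rfl⟩ := hsurj w
  choose m hm using fun g => (hexact (u g - (g • w - w))).1 <| by
    rw [map_sub, map_sub, hp g, hw g, sub_self]
  refine mem_B2_iff.2 ⟨m, fun g h => hinj ?_⟩
  rw [map_add, map_sub, hi g, hm, hm, hm, ← mapZ2_apply i hi, ← hu g h, mul_smul]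
  simp only [smul_sub]
  abel

end ExactSequence

section IndSignCoeff

variable (G : Type) [Group G] (H : Subgroup G) (φ : H →* ℤˣ) (A : Type) [AddCommGroup A]

def indSignCoeff : AddSubgroup (G → A) where
  carrier := {f | ∀ (g : G) (h : H), f (g * h) = (φ h : ℤ) • f g}
  zero_mem' := by simp
  add_mem' ha hb g h := by simp [ha g h, hb g h]
  neg_mem' ha g h := by simp [ha g h]

instance : SMul G (indSignCoeff G H φ A) :=
  ⟨fun σ f => ⟨fun g => f.1 (σ⁻¹ * g), fun g h => by simpa [mul_assoc] using f.2 (σ⁻¹ * g) h⟩⟩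

theorem indSignCoeff_smul_apply (σ : G) (f : indSignCoeff G H φ A) (g : G) :
    (σ • f).1 g = f.1 (σ⁻¹ * g) := rfl

instance : DistribMulAction G (indSignCoeff G H φ A) where
  one_smul f := Subtype.ext (funext fun g => by simp [indSignCoeff_smul_apply])
  mul_smul σ τ f := Subtype.ext (funext fun g => by simp [indSignCoeff_smul_apply, mul_assoc])
  smul_zero σ := rfl
  smul_add σ f f' := rfl

def indSignEquivCoeff : indSign G H φ ≃+ indSignCoeff G H φ ℤ where
  toFun f := ⟨f.1, fun g h => (f.2 g h).trans (smul_eq_mul _ _).symm⟩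
  invFun f := ⟨f.1, fun g h => (f.2 g h).trans (smul_eq_mul _ _)⟩
  map_add' _ _ := rfl

theorem isEquivMapP_indSignEquivCoeff : IsEquivMapP G (indSignEquivCoeff G H φ) :=
  fun _ _ => rfl

noncomputable def cosetPart (x : G) : H :=
  ⟨(x : G ⧸ H).out⁻¹ * x, QuotientGroup.eq.1 (QuotientGroup.out_eq' _)⟩

variable {G H φ A}

theorem out_mul_cosetPart (x : G) : (x : G ⧸ H).out * cosetPart G H x = x :=
  mul_inv_cancel_left _ _

theorem cosetPart_mul (x : G) (h : H) : cosetPart G H (x * h) = cosetPart G H x * h :=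
  Subtype.ext <| by simp [cosetPart, QuotientGroup.mk_mul_of_mem x h.2, mul_assoc]

theorem cosetPart_out (q : G ⧸ H) : cosetPart G H q.out = 1 :=
  Subtype.ext <| by simp [cosetPart]

namespace indSignCoeff

theorem apply_mul (m : indSignCoeff G H φ A) (x : G) (h : H) :
    m.1 (x * h) = (φ h : ℤ) • m.1 x :=
  m.2 x h

theorem apply_inv (m : indSignCoeff G H φ A) (h : H) : m.1 (h : G)⁻¹ = (φ h : ℤ) • m.1 1 := by
  simpa [Int.units_inv_eq_self] using apply_mul m 1 h⁻¹

theorem apply_eq_out (m : indSignCoeff G H φ A) (x : G) :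
    m.1 x = (φ (cosetPart G H x) : ℤ) • m.1 (x : G ⧸ H).out := by
  conv_lhs => rw [← out_mul_cosetPart (H := H) x]
  exact apply_mul m _ _

theorem ext_out {m m' : indSignCoeff G H φ A} (h : ∀ q : G ⧸ H, m.1 q.out = m'.1 q.out) :
    m = m' :=
  Subtype.ext <| funext fun x => by rw [apply_eq_out m, apply_eq_out m', h]

variable (φ) in
noncomputable def extend (v : G ⧸ H → A) : indSignCoeff G H φ A :=
  ⟨fun x => (φ (cosetPart G H x) : ℤ) • v x, fun x h => by
    simp [cosetPart_mul, QuotientGroup.mk_mul_of_mem x h.2, mul_smul, mul_comm]⟩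

theorem extend_apply_out (v : G ⧸ H → A) (q : G ⧸ H) : (extend φ v).1 q.out = v q := by
  simp [extend, cosetPart_out]

theorem exists_apply_one_eq (a : A) : ∃ m : indSignCoeff G H φ A, m.1 1 = a :=
  ⟨extend φ fun _ => (φ (cosetPart G H 1) : ℤ) • a, by
    simp [extend, smul_smul, ← Units.val_mul, Int.units_mul_self]⟩

variable {B C : Type} [AddCommGroup B] [AddCommGroup C]

def map (α : A →+ B) : indSignCoeff G H φ A →+ indSignCoeff G H φ B :=
  ((AddMonoidHom.compLeft α G).comp (indSignCoeff G H φ A).subtype).codRestrict _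
    fun m x h => by simp [apply_mul m x h]

@[simp]
theorem map_apply (α : A →+ B) (m : indSignCoeff G H φ A) (x : G) :
    (map α m).1 x = α (m.1 x) :=
  rfl

theorem isEquivMapP_map (α : A →+ B) : IsEquivMapP G (map (H := H) (φ := φ) α) :=
  fun _ _ => rfl

theorem map_injective {α : A →+ B} (hα : Injective α) : Injective (map (H := H) (φ := φ) α) :=
  fun _ _ h => Subtype.ext <| funext fun x => hα (congrArg (·.1 x) h)

theorem map_surjective {α : A →+ B} (hα : Surjective α) :
    Surjective (map (H := H) (φ := φ) α) :=
  fun m => ⟨extend φ fun q => (hα (m.1 q.out)).choose, ext_out fun q => by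
    simp [extend_apply_out, (hα _).choose_spec]⟩

theorem map_exact {α : A →+ B} {β : B →+ C} (hα : Injective α) (hαβ : Function.Exact α β) :
    Function.Exact (map (H := H) (φ := φ) α) (map β) := by
  refine fun m => ⟨fun hm => ?_, ?_⟩
  · choose a ha using fun x => (hαβ (m.1 x)).1 (congrArg (·.1 x) hm)
    refine ⟨⟨a, fun x h => hα ?_⟩, Subtype.ext (funext ha)⟩
    rw [ha, map_zsmul, ha, apply_mul m]
  · rintro ⟨a, rfl⟩
    exact Subtype.ext <| funext fun x => hαβ.apply_apply_eq_zero _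

theorem bijective_nsmul {n : ℕ} (hA : Bijective fun a : A => n • a) :
    Bijective fun m : indSignCoeff G H φ A => n • m := by
  refine ⟨fun m m' h => Subtype.ext <| funext fun x => hA.1 (congrArg (·.1 x) h), fun m => ?_⟩
  choose a ha using fun x => hA.2 (m.1 x)
  refine ⟨⟨a, fun x h => hA.1 ?_⟩, Subtype.ext (funext ha)⟩
  simp only [ha, smul_comm n, apply_mul m]

end indSignCoeff

end IndSignCoeff

section IsSignCocycle

variable {H : Type} [Group H] {A : Type} [AddCommGroup A]

def IsSignCocycle (φ : H →* ℤˣ) (F : H → A) : Prop :=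
  ∀ h h', F (h * h') = (φ h : ℤ) • F h' + F h

namespace IsSignCocycle

variable {φ : H →* ℤˣ} {F : H → A}

theorem map_one (hF : IsSignCocycle φ F) : F 1 = 0 := by
  simpa using hF 1 1

theorem map_pow (hF : IsSignCocycle φ F) {k : H} (hk : φ k = 1) (n : ℕ) : F (k ^ n) = n • F k := by
  induction n with
  | zero => simp [hF.map_one]
  | succ n ih => rw [pow_succ', hF, hk, ih, succ_nsmul, Units.val_one, one_smul, add_comm]

theorem eq_zero_of_ker [Finite H] [IsAddTorsionFree A] (hF : IsSignCocycle φ F) {k : H}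
    (hk : φ k = 1) : F k = 0 := by
  refine IsAddTorsionFree.nsmul_right_injective (orderOf_pos k).ne' ?_
  simp only [← hF.map_pow hk, pow_orderOf_eq_one, hF.map_one, smul_zero]

theorem eq_smul_sub_of_ker (hF : IsSignCocycle φ F) (hker : ∀ k, φ k = 1 → F k = 0) {h₀ : H}
    (h₀neg : φ h₀ = -1) {a : A} (ha : F h₀ = (φ h₀ : ℤ) • a - a) (h : H) :
    F h = (φ h : ℤ) • a - a := by
  rcases Int.units_eq_one_or (φ h) with hh | hh
  · simp [hker h hh, hh]
  · have hk : φ (h₀⁻¹ * h) = 1 := by simp [h₀neg, hh]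
    rw [← mul_inv_cancel_left h₀ h, hF, hker _ hk, smul_zero, zero_add, ha, mul_inv_cancel_left,
      h₀neg, hh]

theorem exists_forall_eq_smul_sub (hF : IsSignCocycle φ F)
    (hloc : ∀ h, ∃ a, F h = (φ h : ℤ) • a - a) :
    ∃ a, ∀ h, F h = (φ h : ℤ) • a - a := by
  have hker k (hk : φ k = 1) : F k = 0 := by
    obtain ⟨a, ha⟩ := hloc k
    simp [ha, hk]
  by_cases hφ : ∃ h₀, φ h₀ = -1
  · obtain ⟨h₀, h₀neg⟩ := hφ
    obtain ⟨a, ha⟩ := hloc h₀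
    exact ⟨a, hF.eq_smul_sub_of_ker hker h₀neg ha⟩
  · refine ⟨0, fun h => ?_⟩
    simp only [smul_zero, sub_zero]
    exact hker h ((Int.units_eq_one_or _).resolve_right fun hh => hφ ⟨h, hh⟩)

end IsSignCocycle

end IsSignCocycle

section Shapiro

variable {G : Type} [Group G] {H : Subgroup G} {φ : H →* ℤˣ} {A : Type} [AddCommGroup A]

def shapiro : Z1 G (indSignCoeff G H φ A) →+ (H → A) where
  toFun f h := (f.1 h).1 1
  map_zero' := rfl
  map_add' _ _ := rfl

theorem isSignCocycle_shapiro (f : Z1 G (indSignCoeff G H φ A)) : IsSignCocycle φ (shapiro f) :=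
  fun h h' => by
    simp only [shapiro, AddMonoidHom.coe_mk, ZeroHom.coe_mk, Subgroup.coe_mul, f.2 (h : G) h',
      AddSubgroup.coe_add, Pi.add_apply, indSignCoeff_smul_apply, mul_one, indSignCoeff.apply_inv]

theorem shapiro_coboundHom (m : indSignCoeff G H φ A) (h : H) :
    shapiro (coboundHom G _ m) h = (φ h : ℤ) • m.1 1 - m.1 1 := by
  simp [shapiro, indSignCoeff_smul_apply, indSignCoeff.apply_inv]

theorem mem_B1_of_shapiro_eq_zero {f : Z1 G (indSignCoeff G H φ A)} (hf : shapiro f = 0) :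
    f ∈ B1 G _ := by
  have hm : (fun x => -(f.1 x).1 x) ∈ indSignCoeff G H φ A := fun x h => by
    have h1 : (f.1 h).1 h = 0 := by
      have h0 : (f.1 h).1 1 = 0 := congrFun hf h
      simpa [h0] using indSignCoeff.apply_mul (f.1 h) 1 h
    simp [f.2 x h, indSignCoeff_smul_apply, h1, indSignCoeff.apply_mul (f.1 x)]
  refine mem_B1_iff.2 ⟨⟨_, hm⟩, fun σ => Subtype.ext <| funext fun x => ?_⟩
  simp [indSignCoeff_smul_apply, f.2 σ⁻¹ x, Z1_apply_inv f σ]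

theorem mem_B1_of_shapiro_eq {f : Z1 G (indSignCoeff G H φ A)} (a : A)
    (hf : ∀ h, shapiro f h = (φ h : ℤ) • a - a) : f ∈ B1 G _ := by
  obtain ⟨m, rfl⟩ := indSignCoeff.exists_apply_one_eq (H := H) (φ := φ) a
  have : f - coboundHom G _ m ∈ B1 G _ :=
    mem_B1_of_shapiro_eq_zero (funext fun h => by simp [hf, shapiro_coboundHom])
  simpa using add_mem this ⟨m, rfl⟩

theorem exists_shapiro_eq_of_res_mem_B1 {f : Z1 G (indSignCoeff G H φ A)} {h : H}
    (hres : resZ1 G _ (Subgroup.zpowers (h : G)) f ∈ B1 _ _) :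
    ∃ a, shapiro f h = (φ h : ℤ) • a - a := by
  obtain ⟨m, hm⟩ := mem_B1_iff.1 hres
  refine ⟨m.1 1, ?_⟩
  rw [← shapiro_coboundHom]
  exact (congrArg (·.1 1) (hm ⟨h, Subgroup.mem_zpowers _⟩)).symm

theorem Sha1_indSignCoeff_eq_bot : Sha1 G (indSignCoeff G H φ A) = ⊥ := by
  refine Sha1_eq_bot_iff.2 fun f hf => ?_
  obtain ⟨a, ha⟩ := (isSignCocycle_shapiro f).exists_forall_eq_smul_sub
    fun h => exists_shapiro_eq_of_res_mem_B1 (hf h)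
  exact mem_B1_of_shapiro_eq a ha

end Shapiro

section IntegralH1

/-- `(a - b) / 2` for signs `a b`. -/
def halfSignDiff (a b : ℤˣ) : ℤ := if a = b then 0 else a

theorem halfSignDiff_add (a b c : ℤˣ) :
    halfSignDiff a b + halfSignDiff b c = halfSignDiff a c := by
  rcases Int.units_eq_one_or a with rfl | rfl <;> rcases Int.units_eq_one_or b with rfl | rfl <;>
    rcases Int.units_eq_one_or c with rfl | rfl <;> decide

theorem halfSignDiff_mul_right (a b u : ℤˣ) :
    halfSignDiff (a * u) (b * u) = (u : ℤ) * halfSignDiff a b := by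
  rcases Int.units_eq_one_or a with rfl | rfl <;> rcases Int.units_eq_one_or b with rfl | rfl <;>
    rcases Int.units_eq_one_or u with rfl | rfl <;> decide

variable {G : Type} [Group G] {H : Subgroup G} {φ : H →* ℤˣ}

variable (φ) in
/-- `σ ↦ (σ • s - s) / 2` for the sign element `s x = φ (cosetPart G H x)`; its class generates
`H¹`. -/
noncomputable def signCocycle : Z1 G (indSignCoeff G H φ ℤ) :=
  ⟨fun σ => ⟨fun x => halfSignDiff (φ (cosetPart G H x)) (φ (cosetPart G H (σ⁻¹ * x))),
    fun x h => by simp [← mul_assoc, cosetPart_mul, halfSignDiff_mul_right]⟩,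
    fun σ τ => Subtype.ext <| funext fun x => by
      simp only [mul_inv_rev, mul_assoc]
      exact (halfSignDiff_add _ _ _).symm.trans (add_comm _ _)⟩

theorem shapiro_signCocycle {h₀ : H} (h₀neg : φ h₀ = -1) :
    shapiro (signCocycle φ) h₀ = φ (cosetPart G H 1) := by
  have : cosetPart G H (h₀ : G)⁻¹ = cosetPart G H 1 * h₀⁻¹ := by
    rw [← cosetPart_mul, one_mul, Subgroup.coe_inv]
  simp only [shapiro, signCocycle, AddMonoidHom.coe_mk, ZeroHom.coe_mk, mul_one, this, map_mul,
    map_inv, h₀neg]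
  rcases Int.units_eq_one_or (φ (cosetPart G H 1)) with h | h <;> rw [h] <;> decide

theorem mem_B1_of_shapiro_eq_two_mul [Finite H] {f : Z1 G (indSignCoeff G H φ ℤ)} {h₀ : H}
    (h₀neg : φ h₀ = -1) {t : ℤ} (ht : shapiro f h₀ = 2 * t) : f ∈ B1 G _ :=
  mem_B1_of_shapiro_eq (-t) <| (isSignCocycle_shapiro f).eq_smul_sub_of_ker
    (fun _ => (isSignCocycle_shapiro f).eq_zero_of_ker) h₀neg (by simp [ht, h₀neg]; ring)

theorem H1_indSignCoeff_eq_zero_of_eq_one [Finite H] (hφ : φ = 1)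
    (x : H1 G (indSignCoeff G H φ ℤ)) : x = 0 := by
  induction x using QuotientAddGroup.induction_on with
  | H f =>
    refine (QuotientAddGroup.eq_zero_iff f).2 (mem_B1_of_shapiro_eq 0 fun h => ?_)
    simpa using (isSignCocycle_shapiro f).eq_zero_of_ker (by simp [hφ] : φ h = 1)

noncomputable def shapiroMod2 {h₀ : H} (h₀neg : φ h₀ = -1) :
    H1 G (indSignCoeff G H φ ℤ) →+ ZMod 2 :=
  QuotientAddGroup.lift _
    ((Int.castAddHom (ZMod 2)).comp ((Pi.evalAddMonoidHom _ h₀).comp shapiro)) fun _ ⟨m, hm⟩ => by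
      rw [← hm, AddMonoidHom.mem_ker]
      simp only [AddMonoidHom.comp_apply, Pi.evalAddMonoidHom_apply, shapiro_coboundHom, h₀neg,
        Int.coe_castAddHom, ZMod.intCast_zmod_eq_zero_iff_dvd]
      exact ⟨-m.1 1, by simp; ring⟩

theorem shapiroMod2_mk {h₀ : H} (h₀neg : φ h₀ = -1) (f : Z1 G (indSignCoeff G H φ ℤ)) :
    shapiroMod2 h₀neg (f : H1 G _) = ((shapiro f h₀ : ℤ) : ZMod 2) := rfl

theorem bijective_shapiroMod2 [Finite H] {h₀ : H} (h₀neg : φ h₀ = -1) :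
    Bijective (shapiroMod2 (G := G) h₀neg) := by
  refine ⟨(injective_iff_map_eq_zero _).2 fun x hx => ?_, fun y => ?_⟩
  · induction x using QuotientAddGroup.induction_on with
    | H f =>
      rw [shapiroMod2_mk, ZMod.intCast_zmod_eq_zero_iff_dvd] at hx
      obtain ⟨t, ht⟩ := hx
      exact (QuotientAddGroup.eq_zero_iff f).2 (mem_B1_of_shapiro_eq_two_mul h₀neg ht)
  · have h1 : shapiroMod2 h₀neg (signCocycle φ : H1 G _) = 1 := by
      rw [shapiroMod2_mk, shapiro_signCocycle h₀neg]
      rcases Int.units_eq_one_or (φ (cosetPart G H 1)) with h | h <;> rw [h] <;> decide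
    refine ⟨(y.cast : ℤ) • (signCocycle φ : H1 G _), ?_⟩
    rw [map_zsmul, h1, zsmul_one, ZMod.intCast_zmod_cast]

end IntegralH1

section Assembly

theorem bijective_nsmul_rat {n : ℕ} (hn : n ≠ 0) : Bijective fun q : ℚ => n • q :=
  ⟨IsAddTorsionFree.nsmul_right_injective hn,
    fun q => ⟨q / n, by simp [nsmul_eq_mul, mul_div_cancel₀, hn]⟩⟩

theorem exact_intCast_mk' :
    Function.Exact (Int.castAddHom ℚ) (QuotientAddGroup.mk' (Int.castAddHom ℚ).range) :=
  fun q => (QuotientAddGroup.eq_zero_iff q).trans AddMonoidHom.mem_range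

theorem exists_eq_neg_one_of_ne_one {K : Type} [Group K] {χ : K →* ℤˣ} (hχ : χ ≠ 1) :
    ∃ k, χ k = -1 := by
  by_contra! hc
  exact hχ (MonoidHom.ext fun k => (Int.units_eq_one_or _).resolve_right (hc k))

variable {G : Type} [Group G] {H : Subgroup G} {φ : H →* ℤˣ}

noncomputable def h1IndSignEquiv [Finite H] {h₀ : H} (h₀neg : φ h₀ = -1) :
    H1 G (indSign G H φ) ≃+ ZMod 2 :=
  (h1Congr _ (isEquivMapP_indSignEquivCoeff G H φ)).trans
    (AddEquiv.ofBijective _ (bijective_shapiroMod2 h₀neg))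

theorem H1_indSign_eq_zero_of_eq_one [Finite H] (hφ : φ = 1) (x : H1 G (indSign G H φ)) :
    x = 0 :=
  (AddEquiv.map_eq_zero_iff (h1Congr _ (isEquivMapP_indSignEquivCoeff G H φ))).1
    (H1_indSignCoeff_eq_zero_of_eq_one hφ _)

theorem Sha1_indSign_eq_bot : Sha1 G (indSign G H φ) = ⊥ := by
  refine eq_bot_iff.2 fun x hx => ?_
  have := mapH1_mem_Sha1 (indSignEquivCoeff G H φ).toAddMonoidHom
    (isEquivMapP_indSignEquivCoeff G H φ) hx
  rw [Sha1_indSignCoeff_eq_bot] at this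
  exact (AddEquiv.map_eq_zero_iff (h1Congr _ (isEquivMapP_indSignEquivCoeff G H φ))).1 this

theorem Sha2_indSign_eq_bot [Finite G] : Sha2 G (indSign G H φ) = ⊥ := by
  have hV (n : ℕ) (hn : n ≠ 0) : Bijective fun v : indSignCoeff G H φ ℚ => n • v :=
    indSignCoeff.bijective_nsmul (bijective_nsmul_rat hn)
  refine Sha2_eq_bot_of_exact
    (i := (indSignCoeff.map (Int.castAddHom ℚ)).comp (indSignEquivCoeff G H φ).toAddMonoidHom)
    (fun _ _ => rfl) (indSignCoeff.isEquivMapP_map _)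
    ((indSignCoeff.map_injective Int.cast_injective).comp (indSignEquivCoeff G H φ).injective)
    (indSignCoeff.map_surjective (QuotientAddGroup.mk'_surjective (Int.castAddHom ℚ).range))
    (fun v => ?_)
    (mem_B2_of_bijective_nsmul (hV _ Nat.card_pos.ne'))
    (fun _ => mem_B1_of_bijective_nsmul (hV _ Nat.card_pos.ne')) Sha1_indSignCoeff_eq_bot
  rw [indSignCoeff.map_exact Int.cast_injective exact_intCast_mk' v, AddMonoidHom.coe_comp,
    AddEquiv.coe_toAddMonoidHom, (indSignEquivCoeff G H φ).surjective.range_comp]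

noncomputable def h1PiIndSignEquiv [Finite G] {ι : Type} (K : ι → Subgroup G)
    (ψ : ∀ i, K i →* ℤˣ) : H1 G (∀ i, indSign G (K i) (ψ i)) ≃+ ({i : ι // ψ i ≠ 1} → ZMod 2) :=
  h1PiEquiv.trans <|
    (piEquivPiSubtypeOfEqZero _ fun _ hi => H1_indSign_eq_zero_of_eq_one (not_not.1 hi)).trans <|
    AddEquiv.piCongrRight fun j => h1IndSignEquiv (exists_eq_neg_one_of_ne_one j.2).choose_spec

end Assembly

theorem stmt_18_general (G : Type) [Group G] [Finite G]
    (H : Subgroup G) (φ : H →* ℤˣ) (hφ : φ ≠ 1)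
    (ι : Type) (K : ι → Subgroup G) (ψ : ∀ i, (K i) →* ℤˣ) :
    Nonempty (H1 G (indSign G H φ) ≃+ ZMod 2) ∧
    (∀ x : Sha1 G (indSign G H φ), x = 0) ∧
    Nonempty (H1 G (∀ i, indSign G (K i) (ψ i)) ≃+ ({i : ι // ψ i ≠ 1} → ZMod 2)) ∧
    (∀ x : Sha1 G (∀ i, indSign G (K i) (ψ i)), x = 0) ∧
    (∀ x : Sha2 G (∀ i, indSign G (K i) (ψ i)), x = 0) := by
  obtain ⟨h₀, h₀neg⟩ := exists_eq_neg_one_of_ne_one hφ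
  exact ⟨⟨h1IndSignEquiv h₀neg⟩, eq_zero_of_eq_bot Sha1_indSign_eq_bot, ⟨h1PiIndSignEquiv K ψ⟩,
    eq_zero_of_eq_bot (Sha1_pi_eq_bot fun _ => Sha1_indSign_eq_bot),
    eq_zero_of_eq_bot (Sha2_pi_eq_bot fun _ => Sha2_indSign_eq_bot)⟩

theorem stmt_18 (G : Type) [Group G] [Finite G]
    (H : Subgroup G) (φ : H →* ℤˣ) (hφ : φ ≠ 1)
    (ι : Type) [Fintype ι] (K : ι → Subgroup G) (ψ : ∀ i, (K i) →* ℤˣ) :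
    Nonempty (H1 G (indSign G H φ) ≃+ ZMod 2) ∧
    (∀ x : Sha1 G (indSign G H φ), x = 0) ∧
    Nonempty (H1 G (∀ i, indSign G (K i) (ψ i)) ≃+ ({i : ι // ψ i ≠ 1} → ZMod 2)) ∧
    (∀ x : Sha1 G (∀ i, indSign G (K i) (ψ i)), x = 0) ∧
    (∀ x : Sha2 G (∀ i, indSign G (K i) (ψ i)), x = 0) :=
  stmt_18_general G H φ hφ ι K ψ
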